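/- Let A and B be finite types and let s be a finite list of observed pairs in B × A. For b ∈ B, let n(b) be the number of occurrences in s of pairs with first component b, and for (b,a) let n(b,a) be the number of occurrences of (b,a) in s. Define the empirical conditional table ĥ by ĥ(a|b) = n(b,a)/n(b) for every b with n(b) > 0. Then for every conditional probability table h (i.e., for each b ∈ B, h(·|b) is a probability mass function on A) satisfying h(a|b) > 0 for every pair (b,a) occurring in s, the conditional log-likelihood satisfies ∑_{(b,a) ∈ s} log h(a|b) ≤ ∑_{(b,a) ∈ s} log ĥ(a|b). In other words, the empirical conditional frequencies maximize the conditional log-likelihood of the observed pairs. -/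
import Mathlib

open Finset

/-- Gibbs' inequality with natural-number weights. -/
lemma gibbs_aux {A : Type*} [Fintype A] [DecidableEq A] (c : A → ℕ) (h : A → ℝ)
    (h0 : ∀ a, 0 ≤ h a) (h1 : ∑ a, h a = 1)
    (hpos : ∀ a, 0 < c a → 0 < h a) :
    ∑ a, (c a : ℝ) * Real.log (h a)
      ≤ ∑ a, (c a : ℝ) * Real.log ((c a : ℝ) / ((∑ a, c a : ℕ) : ℝ)) := by
  classical
  set N : ℕ := ∑ a, c a with hN
  by_cases hN0 : N = 0
  · have hz : ∀ a, c a = 0 := by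
      intro a
      have := (Finset.sum_eq_zero_iff.mp hN0.symm.symm) a (Finset.mem_univ a)
      exact this
    simp [hz]
  · have hNpos : 0 < (N : ℝ) := by
      exact_mod_cast Nat.pos_of_ne_zero hN0
    set T : Finset A := Finset.univ.filter (fun a => c a ≠ 0) with hT
    have hsub : ∀ f : A → ℝ, ∑ a, (c a : ℝ) * f a = ∑ a ∈ T, (c a : ℝ) * f a := by
      intro f
      symm
      apply Finset.sum_subset (Finset.subset_univ _)
      intro x _ hx
      have : c x = 0 := by
        by_contra hc
        exact hx (Finset.mem_filter.mpr ⟨Finset.mem_univ x, hc⟩)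
      simp [this]
    have hTsum : ∑ a ∈ T, (c a : ℝ) = (N : ℝ) := by
      have : ∑ a ∈ T, c a = N := by
        rw [hN]
        apply Finset.sum_subset (Finset.subset_univ _)
        intro x _ hx
        by_contra hc
        exact hx (Finset.mem_filter.mpr ⟨Finset.mem_univ x, hc⟩)
      exact_mod_cast congrArg (Nat.cast : ℕ → ℝ) this
    rw [hsub (fun a => Real.log (h a)), hsub (fun a => Real.log ((c a : ℝ) / (N : ℝ)))]
    rw [← sub_nonneg, ← Finset.sum_sub_distrib]
    have step : ∀ a ∈ T, (c a : ℝ) * Real.log (h a) - (c a : ℝ) * Real.log ((c a : ℝ) / (N : ℝ))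
        ≥ 0 → True := fun _ _ _ => trivial
    have key : ∑ a ∈ T, ((c a : ℝ) * Real.log ((c a : ℝ) / (N : ℝ)) - (c a : ℝ) * Real.log (h a))
        ≥ ∑ a ∈ T, ((c a : ℝ) - h a * (N : ℝ)) := by
      apply Finset.sum_le_sum
      intro a ha
      have hca : 0 < c a := Nat.pos_of_ne_zero (Finset.mem_filter.mp ha).2
      have hcaR : 0 < (c a : ℝ) := by exact_mod_cast hca
      have hha : 0 < h a := hpos a hca
      have hdiff : Real.log (h a) - Real.log ((c a : ℝ) / (N : ℝ))
          = Real.log (h a * (N : ℝ) / (c a : ℝ)) := by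
        rw [Real.log_div (ne_of_gt hcaR) (ne_of_gt hNpos),
          Real.log_div (by positivity) (ne_of_gt hcaR),
          Real.log_mul (ne_of_gt hha) (ne_of_gt hNpos)]
        ring
      have hlog : Real.log (h a * (N : ℝ) / (c a : ℝ)) ≤ h a * (N : ℝ) / (c a : ℝ) - 1 :=
        Real.log_le_sub_one_of_pos (by positivity)
      have : (c a : ℝ) * Real.log (h a) - (c a : ℝ) * Real.log ((c a : ℝ) / (N : ℝ))
          ≤ h a * (N : ℝ) - (c a : ℝ) := by
        rw [← mul_sub, hdiff]
        calc (c a : ℝ) * Real.log (h a * (N : ℝ) / (c a : ℝ))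
            ≤ (c a : ℝ) * (h a * (N : ℝ) / (c a : ℝ) - 1) := by
              exact mul_le_mul_of_nonneg_left hlog (le_of_lt hcaR)
          _ = h a * (N : ℝ) - (c a : ℝ) := by field_simp
      linarith
    have hsumh : ∑ a ∈ T, h a ≤ 1 := by
      rw [← h1]
      exact Finset.sum_le_sum_of_subset_of_nonneg (Finset.subset_univ _)
        (fun a _ _ => h0 a)
    have : ∑ a ∈ T, ((c a : ℝ) - h a * (N : ℝ)) ≥ 0 := by
      rw [Finset.sum_sub_distrib, hTsum, ← Finset.sum_mul]
      nlinarith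
    calc (0 : ℝ) ≤ ∑ a ∈ T, ((c a : ℝ) - h a * (N : ℝ)) := this
      _ ≤ _ := key

lemma count_congr' {α : Type*} (i1 i2 : BEq α) (h1 : @LawfulBEq α i1) (h2 : @LawfulBEq α i2)
    (a : α) (l : List α) : @List.count α i1 a l = @List.count α i2 a l := by
  induction l with
  | nil => rfl
  | cons x t ih =>
    rw [@List.count_cons α i1, @List.count_cons α i2, ih]
    congr 1
    by_cases hxa : x = a
    · simp [hxa]
    · simp [hxa]

lemma count_zero_of_notMem' {α : Type*} [DecidableEq α] (s : List α) (x : α)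
    (hx : x ∉ s) : @List.count α instBEqOfDecidableEq x s = 0 :=
  List.count_eq_zero.mpr hx

lemma filter_len_eq {A B : Type*} [Fintype A] [DecidableEq A] [DecidableEq B]
    (s : List (B × A)) (b : B) :
    (s.filter (fun x => x.1 = b)).length = ∑ a, s.count (b, a) := by
  induction s with
  | nil => simp
  | cons x t ih =>
    rcases x with ⟨b', a'⟩
    by_cases hb : b' = b
    · subst hb
      rw [List.filter_cons_of_pos (by simp)]
      simp only [List.length_cons, ih]
      have hc : ∀ a : A, List.count (b', a) ((b', a') :: t)
          = List.count (b', a) t + if a = a' then 1 else 0 := by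
        intro a
        rw [List.count_cons]
        simp only [Prod.mk.injEq, beq_iff_eq, true_and]
        congr 1
        simp [eq_comm]
      simp only [hc]
      rw [Finset.sum_add_distrib, Finset.sum_ite_eq' Finset.univ a' (fun _ => 1)]
      simp
    · rw [List.filter_cons_of_neg (by simp [hb])]
      rw [ih]
      apply Finset.sum_congr rfl
      intro a _
      rw [List.count_cons]
      simp [Prod.ext_iff, Ne.symm hb, hb]

/-- Let `s` be a finite list of observed pairs in `B × A`. For `b : B` let
`n b = number of occurrences in s of pairs with first component b`, and let
`n (b,a) = number of occurrences of (b,a) in s`. Define the empirical conditional table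
`ĥ` by `ĥ a b = n (b,a) / n b` whenever `n b > 0`. Then for every conditional probability
table `h` (for each `b`, `h · b` is a probability mass function on `A`) with
`h a b > 0` for every pair `(b,a)` occurring in `s`, the conditional log-likelihood
satisfies `∑_{(b,a) ∈ s} log (h a b) ≤ ∑_{(b,a) ∈ s} log (ĥ a b)`
(sums over the list counting multiplicity). -/
theorem empirical_conditional_maximizes_loglikelihood
    {A B : Type*} [Fintype A] [Fintype B] [DecidableEq A] [DecidableEq B]
    (s : List (B × A))
    (hhat : B → A → ℝ)
    (hhat_def : ∀ b a, 0 < (s.filter (fun x => x.1 = b)).length →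
      hhat b a = (s.count (b, a) : ℝ) / ((s.filter (fun x => x.1 = b)).length : ℝ))
    (h : B → A → ℝ)
    (h0 : ∀ b a, 0 ≤ h b a) (h1 : ∀ b, ∑ a, h b a = 1)
    (hpos : ∀ x ∈ s, 0 < h x.1 x.2) :
    (s.map (fun x => Real.log (h x.1 x.2))).sum
      ≤ (s.map (fun x => Real.log (hhat x.1 x.2))).sum := by
  classical
  have key : ∀ g : B → A → ℝ, (s.map (fun x => Real.log (g x.1 x.2))).sum
      = ∑ p : B × A, (s.count p : ℝ) * Real.log (g p.1 p.2) := by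
    intro g
    rw [Finset.sum_list_map_count]
    refine (Finset.sum_congr rfl (fun m _ => ?_)).trans
      (Finset.sum_subset
        (f := fun p : B × A => ((@List.count (B × A) (@instBEqProd B A instBEqOfDecidableEq instBEqOfDecidableEq) p s : ℕ) : ℝ) * Real.log (g p.1 p.2))
        (Finset.subset_univ s.toFinset) (fun x _ hx => ?_))
    · rw [nsmul_eq_mul]
      congr 1
      have hcc := count_congr' (α := B × A) instBEqOfDecidableEq
        (@instBEqProd B A instBEqOfDecidableEq instBEqOfDecidableEq)
        (@instLawfulBEq (B × A) instDecidableEqProd)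
        (@Prod.instLawfulBEq B A _ _ (@instLawfulBEq B _) (@instLawfulBEq A _)) m s
      exact_mod_cast hcc
    · show ((@List.count (B × A) (@instBEqProd B A instBEqOfDecidableEq instBEqOfDecidableEq) x s : ℕ) : ℝ)
          * Real.log (g x.1 x.2) = 0
      have hmem : x ∉ s := fun hmem => hx (List.mem_toFinset.mpr hmem)
      rw [List.count_eq_zero.mpr hmem]
      simp
  rw [key h, key hhat, Fintype.sum_prod_type, Fintype.sum_prod_type]
  apply Finset.sum_le_sum
  intro b _
  by_cases hNb : 0 < (s.filter (fun x => x.1 = b)).length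
  · have hg := gibbs_aux (fun a => s.count (b, a)) (h b) (h0 b) (h1 b)
      (fun a hc => hpos (b, a) (List.count_pos_iff.mp hc))
    calc ∑ a, (s.count (b, a) : ℝ) * Real.log (h b a)
        ≤ ∑ a, (s.count (b, a) : ℝ)
            * Real.log ((s.count (b, a) : ℝ) / ((∑ a, s.count (b, a) : ℕ) : ℝ)) := hg
      _ = ∑ a, (s.count (b, a) : ℝ) * Real.log (hhat b a) := by
          apply Finset.sum_congr rfl
          intro a _
          rw [hhat_def b a hNb, filter_len_eq]
  · have hlen : (s.filter (fun x => x.1 = b)).length = 0 := Nat.eq_zero_of_not_pos hNb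
    have hz : ∀ a, s.count (b, a) = 0 := by
      intro a
      by_contra hc
      have hmem : (b, a) ∈ s := List.count_pos_iff.mp (Nat.pos_of_ne_zero hc)
      have : (b, a) ∈ s.filter (fun x => x.1 = b) := List.mem_filter.mpr ⟨hmem, by simp⟩
      exact hNb (List.length_pos_iff.mpr (List.ne_nil_of_mem this))
    simp [hz]
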